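/- arXiv:1906.11274 — 2 statements merged into one kernel-verified Lean document; each statement's English description precedes it below -/
import Mathlib

section
/- Let λ > 0 and p > 1. There exists C > 0 (depending on λ and p) such that for every continuously differentiable u : ℝ → ℂ which is odd (u(-x) = -u(x)), bounded, and vanishing at infinity, with sech(x/λ)·u and its derivative square-integrable, one has ∫_ℝ sech²(x/λ) |u(x)|^{p+1} dx ≤ C · ‖u‖_{L^∞(ℝ)}^{p-1} · ∫_ℝ |d/dx( sech(x/λ)·u(x) )|² dx. -/
/-!
Put `v = sech(x/λ) u` and `α = (p - 1)/λ`. Oddness gives `u 0 = 0`, hence `v 0 = 0`, so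
integrating `(e^{αx} |v|^{p+1})'` over `(0, ∞)` leaves no boundary term:
`α ∫ e^{αx} |v|^{p+1} = -∫ e^{αx} (|v|^{p+1})'`. Because `sech(x/λ) ≤ 2 e^{-x/λ}`, the weight
`e^{αx} |v|^{p-1}` is bounded by `(2‖u‖_∞)^{p-1}`, and Young's inequality absorbs half of the
left-hand side, leaving a multiple of `∫ |v'|²`. Finally
`sech²(x/λ) |u|^{p+1} = cosh^{p-1}(x/λ) |v|^{p+1} ≤ e^{αx} |v|^{p+1}` for `x ≥ 0`, and this
integrand is even.
-/

open MeasureTheory Real Filter Set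
open scoped RealInnerProductSpace

theorem HasDerivAt.norm_rpow {E : Type*} [NormedAddCommGroup E] [InnerProductSpace ℝ E]
    {f : ℝ → E} {f' : E} {x r : ℝ} (hf : HasDerivAt f f' x) (hr : 1 < r) :
    HasDerivAt (fun y => ‖f y‖ ^ r) (r * ‖f x‖ ^ (r - 2) * ⟪f x, f'⟫) x := by
  refine ((hasFDerivAt_norm_rpow (f x) hr).comp_hasDerivAt x hf).congr_deriv ?_
  simp [mul_assoc]

theorem rpow_eq_rpow_sub_two_mul_sq {a r : ℝ} (ha : 0 ≤ a) (hr : r ≠ 0) :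
    a ^ r = a ^ (r - 2) * a ^ 2 := by
  rw [← rpow_natCast, ← rpow_add' ha (by simpa using hr)]
  norm_num

theorem integrableOn_exp_mul_norm_rpow {E : Type*} [NormedAddCommGroup E] {v : ℝ → E}
    {α r K : ℝ} (hv : Continuous v) (hr : r ≠ 0)
    (hK : ∀ x ∈ Ioi (0 : ℝ), exp (α * x) * ‖v x‖ ^ (r - 2) ≤ K)
    (hv2 : IntegrableOn (fun x => ‖v x‖ ^ 2) (Ioi 0)) :
    IntegrableOn (fun x => exp (α * x) * ‖v x‖ ^ r) (Ioi 0) := by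
  refine Integrable.mono' (hv2.const_mul K) ?_ ?_
  · exact ((continuous_const.mul continuous_id).rexp.measurable.mul
      (hv.norm.measurable.pow_const r)).aestronglyMeasurable
  · filter_upwards [ae_restrict_mem measurableSet_Ioi] with x hx
    rw [norm_of_nonneg (by positivity), rpow_eq_rpow_sub_two_mul_sq (norm_nonneg _) hr,
      ← mul_assoc]
    exact mul_le_mul_of_nonneg_right (hK x hx) (by positivity)

theorem young_mul_le {α r B K a s : ℝ} (hα : 0 < α) (hB : 0 ≤ B) (hBK : B ≤ K) :
    r * B * (a * s) ≤ α / 2 * (B * a ^ 2) + r ^ 2 * K / (2 * α) * s ^ 2 := by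
  have hsq := mul_nonneg hB (sq_nonneg (α * a - r * s))
  have hKB := mul_le_mul_of_nonneg_right hBK (sq_nonneg (r * s))
  field_simp
  nlinarith

theorem mul_integral_Ioi_exp_mul_eq_neg {f f' : ℝ → ℝ} {α : ℝ}
    (hf : ∀ x, HasDerivAt f (f' x) x) (hf0 : f 0 = 0)
    (hint : IntegrableOn (fun x => exp (α * x) * f x) (Ioi 0))
    (hint' : IntegrableOn (fun x => exp (α * x) * f' x) (Ioi 0)) :
    α * ∫ x in Ioi 0, exp (α * x) * f x = -∫ x in Ioi 0, exp (α * x) * f' x := by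
  have hderiv : ∀ x, HasDerivAt (fun y => exp (α * y) * f y)
      (α * (exp (α * x) * f x) + exp (α * x) * f' x) x := fun x => by
    refine (((hasDerivAt_id x).const_mul α).exp.mul (hf x)).congr_deriv ?_
    simp only [id]
    ring
  have hint'' := (hint.const_mul α).add hint'
  have hFTC := integral_Ioi_of_hasDerivAt_of_tendsto' (fun x _ => hderiv x) hint''
    (tendsto_zero_of_hasDerivAt_of_integrableOn_Ioi (fun x _ => hderiv x) hint'' hint)
  rw [integral_add (hint.const_mul α) hint', integral_const_mul] at hFTC
  simp only [hf0, mul_zero, sub_zero] at hFTC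
  linarith

theorem integral_Ioi_exp_mul_norm_rpow_le {E : Type*} [NormedAddCommGroup E]
    [InnerProductSpace ℝ E] {v : ℝ → E} {α r K : ℝ} (hv : ContDiff ℝ 1 v) (hv0 : v 0 = 0)
    (hα : 0 < α) (hr : 1 < r) (hK : ∀ x ∈ Ioi (0 : ℝ), exp (α * x) * ‖v x‖ ^ (r - 2) ≤ K)
    (hv2 : IntegrableOn (fun x => ‖v x‖ ^ 2) (Ioi 0))
    (hv'2 : IntegrableOn (fun x => ‖deriv v x‖ ^ 2) (Ioi 0)) :
    ∫ x in Ioi 0, exp (α * x) * ‖v x‖ ^ r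
      ≤ r ^ 2 * K / α ^ 2 * ∫ x in Ioi 0, ‖deriv v x‖ ^ 2 := by
  set G := fun x => exp (α * x) * ‖v x‖ ^ r
  set φ' := fun x => r * ‖v x‖ ^ (r - 2) * ⟪v x, deriv v x⟫
  set c := r ^ 2 * K / (2 * α)
  have hpt : ∀ x ∈ Ioi (0 : ℝ), ‖exp (α * x) * φ' x‖ ≤ α / 2 * G x + c * ‖deriv v x‖ ^ 2 := by
    intro x hx
    calc ‖exp (α * x) * φ' x‖ = r * (exp (α * x) * ‖v x‖ ^ (r - 2)) * |⟪v x, deriv v x⟫| := by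
          simp only [φ', norm_mul, norm_eq_abs, abs_of_nonneg (exp_pos _).le,
            abs_of_nonneg (by linarith : 0 ≤ r), abs_of_nonneg (rpow_nonneg (norm_nonneg _) _)]
          ring
      _ ≤ r * (exp (α * x) * ‖v x‖ ^ (r - 2)) * (‖v x‖ * ‖deriv v x‖) := by
          gcongr; exact abs_real_inner_le_norm _ _
      _ ≤ α / 2 * G x + c * ‖deriv v x‖ ^ 2 := by
          rw [show G x = exp (α * x) * ‖v x‖ ^ (r - 2) * ‖v x‖ ^ 2 by
            simp only [G]; rw [rpow_eq_rpow_sub_two_mul_sq (norm_nonneg _) (by linarith)]; ring]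
          exact young_mul_le hα (by positivity) (hK x hx)
  have hGint : IntegrableOn G (Ioi 0) :=
    integrableOn_exp_mul_norm_rpow hv.continuous (by linarith) hK hv2
  have hbound : IntegrableOn (fun x => α / 2 * G x + c * ‖deriv v x‖ ^ 2) (Ioi 0) :=
    (hGint.const_mul _).add (hv'2.const_mul c)
  have hφ'int : IntegrableOn (fun x => exp (α * x) * φ' x) (Ioi 0) := by
    refine hbound.mono' ?_ ((ae_restrict_iff' measurableSet_Ioi).2 (Eventually.of_forall hpt))
    have hinner : Continuous fun x => ⟪v x, deriv v x⟫ :=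
      hv.continuous.inner (hv.continuous_deriv le_rfl)
    exact ((continuous_const.mul continuous_id).rexp.measurable.mul
      ((measurable_const.mul (hv.continuous.norm.measurable.pow_const _)).mul
        hinner.measurable)).aestronglyMeasurable
  have hIBP := mul_integral_Ioi_exp_mul_eq_neg
    (fun x => ((hv.differentiable one_ne_zero x).hasDerivAt).norm_rpow hr)
    (by simp [hv0, zero_rpow (by linarith : r ≠ 0)]) hGint hφ'int
  set I := ∫ x in Ioi 0, G x
  set D := ∫ x in Ioi 0, ‖deriv v x‖ ^ 2
  have hI : α * I ≤ α / 2 * I + c * D :=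
    calc α * I = -∫ x in Ioi 0, exp (α * x) * φ' x := hIBP
      _ ≤ ∫ x in Ioi 0, ‖exp (α * x) * φ' x‖ :=
          (neg_le_abs _).trans ((norm_eq_abs _).symm.trans_le (norm_integral_le_integral_norm _))
      _ ≤ ∫ x in Ioi 0, (α / 2 * G x + c * ‖deriv v x‖ ^ 2) :=
          setIntegral_mono_on hφ'int.norm hbound measurableSet_Ioi hpt
      _ = α / 2 * I + c * D := by
          rw [integral_add (hGint.const_mul _) (hv'2.const_mul c), integral_const_mul,
            integral_const_mul]
  calc I = 2 / α * (α / 2 * I) := by field_simp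
    _ ≤ 2 / α * (c * D) := mul_le_mul_of_nonneg_left (by linarith) (by positivity)
    _ = r ^ 2 * K / α ^ 2 * D := by simp only [c]; field_simp

theorem Real.exp_le_two_mul_cosh (t : ℝ) : exp t ≤ 2 * cosh t := by
  rw [cosh_eq]; linarith [exp_pos (-t)]

theorem Real.cosh_le_exp_of_nonneg {t : ℝ} (ht : 0 ≤ t) : cosh t ≤ exp t := by
  rw [cosh_eq]; linarith [exp_le_exp.2 (neg_le_self ht)]

theorem exp_rpow_mul_div_cosh_rpow_le (t : ℝ) {a q : ℝ} (ha : 0 ≤ a) (hq : 0 ≤ q) :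
    exp t ^ q * (a / cosh t) ^ q ≤ (2 * a) ^ q := by
  rw [← mul_rpow (exp_pos t).le (by positivity)]
  refine rpow_le_rpow (by positivity) ?_ hq
  rw [mul_div_assoc', div_le_iff₀ (cosh_pos t)]
  nlinarith [exp_le_two_mul_cosh t]

theorem sech_sq_mul_rpow_le {t a p : ℝ} (ht : 0 ≤ t) (ha : 0 ≤ a) (hp : 1 ≤ p) :
    (1 / cosh t) ^ 2 * a ^ (p + 1) ≤ exp t ^ (p - 1) * (a / cosh t) ^ (p + 1) := by
  have hc := cosh_pos t
  have hsplit : cosh t ^ (p + 1) = cosh t ^ (p - 1) * cosh t ^ 2 := by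
    rw [rpow_eq_rpow_sub_two_mul_sq hc.le (by linarith)]
    ring_nf
  calc (1 / cosh t) ^ 2 * a ^ (p + 1) = cosh t ^ (p - 1) * (a / cosh t) ^ (p + 1) := by
        rw [div_rpow ha hc.le, hsplit]
        field_simp
    _ ≤ exp t ^ (p - 1) * (a / cosh t) ^ (p + 1) := by
        have := rpow_le_rpow hc.le (cosh_le_exp_of_nonneg ht) (by linarith : 0 ≤ p - 1)
        gcongr

theorem integral_eq_two_mul_integral_Ioi_of_even {f : ℝ → ℝ} (hf : ∀ x, f (-x) = f x) :
    ∫ x, f x = 2 * ∫ x in Ioi 0, f x := by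
  rw [← integral_comp_abs]
  congr with x
  rcases abs_choice x with h | h <;> simp [h, hf]

theorem integral_Ioi_sech_sq_mul_norm_rpow_le {E : Type*} [NormedAddCommGroup E]
    [InnerProductSpace ℝ E] {u : ℝ → E} {lam p M : ℝ} (hlam : 0 < lam) (hp : 1 < p)
    (hu : ContDiff ℝ 1 u) (hu0 : u 0 = 0) (hM : ∀ x, ‖u x‖ ≤ M)
    (hv2 : IntegrableOn (fun x => ‖(1 / cosh (x / lam)) • u x‖ ^ 2) (Ioi 0))
    (hv'2 : IntegrableOn
      (fun x => ‖deriv (fun y => (1 / cosh (y / lam)) • u y) x‖ ^ 2) (Ioi 0)) :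
    ∫ x in Ioi 0, (1 / cosh (x / lam)) ^ 2 * ‖u x‖ ^ (p + 1)
      ≤ (p + 1) ^ 2 * (2 * M) ^ (p - 1) / ((p - 1) / lam) ^ 2
        * ∫ x in Ioi 0, ‖deriv (fun y => (1 / cosh (y / lam)) • u y) x‖ ^ 2 := by
  set v := fun y => (1 / cosh (y / lam)) • u y
  have hv : ContDiff ℝ 1 v :=
    (contDiff_const.div (contDiff_cosh.comp (contDiff_id.div_const lam))
      fun y => (cosh_pos _).ne').smul hu
  have hnorm : ∀ x, ‖v x‖ = ‖u x‖ / cosh (x / lam) := fun x => by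
    rw [norm_smul, norm_of_nonneg (one_div_pos.2 (cosh_pos _)).le, one_div_mul_eq_div]
  have hexp : ∀ x, exp ((p - 1) / lam * x) = exp (x / lam) ^ (p - 1) := fun x => by
    rw [← exp_mul]; ring_nf
  have hK : ∀ x ∈ Ioi (0 : ℝ),
      exp ((p - 1) / lam * x) * ‖v x‖ ^ (p + 1 - 2) ≤ (2 * M) ^ (p - 1) := fun x _ => by
    rw [hexp, hnorm, show p + 1 - 2 = p - 1 by ring]
    exact (exp_rpow_mul_div_cosh_rpow_le _ (norm_nonneg _) (by linarith)).trans
      (rpow_le_rpow (by positivity) (by linarith [hM x]) (by linarith))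
  refine le_trans ?_ (integral_Ioi_exp_mul_norm_rpow_le hv (by simp [v, hu0])
    (div_pos (by linarith) hlam) (by linarith) hK hv2 hv'2)
  refine integral_mono_of_nonneg (Eventually.of_forall fun x => by positivity)
    (integrableOn_exp_mul_norm_rpow hv.continuous (by linarith) hK hv2) ?_
  filter_upwards [ae_restrict_mem measurableSet_Ioi] with x hx
  rw [hexp, hnorm]
  exact sech_sq_mul_rpow_le (div_nonneg (le_of_lt hx) hlam.le) (norm_nonneg _) hp.le

/-- Key nonlinear estimate: for odd bounded functions vanishing at infinity, the weighted
L^{p+1} norm is controlled by the sup norm and the derivative of sech(x/λ)·u. -/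
theorem weighted_Lp_estimate_odd
    (lam p : ℝ) (hlam : 0 < lam) (hp : 1 < p) :
    ∃ C > 0, ∀ u : ℝ → ℂ,
      ContDiff ℝ 1 u →
      (∀ x : ℝ, u (-x) = - u x) →
      BddAbove (Set.range fun x : ℝ => ‖u x‖) →
      Tendsto u (cocompact ℝ) (nhds 0) →
      Integrable (fun x : ℝ => ‖((1 / Real.cosh (x / lam) : ℝ) : ℂ) * u x‖ ^ 2) →
      Integrable (fun x : ℝ =>
        ‖deriv (fun y : ℝ => ((1 / Real.cosh (y / lam) : ℝ) : ℂ) * u y) x‖ ^ 2) →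
      (∫ x : ℝ, (1 / Real.cosh (x / lam)) ^ 2 * ‖u x‖ ^ (p + 1))
      ≤ C * (⨆ x : ℝ, ‖u x‖) ^ (p - 1)
          * ∫ x : ℝ, ‖deriv (fun y : ℝ => ((1 / Real.cosh (y / lam) : ℝ) : ℂ) * u y) x‖ ^ 2 := by
  refine ⟨2 ^ p * ((p + 1) * lam / (p - 1)) ^ 2, by positivity, ?_⟩
  intro u hu hodd hbdd _ hv2 hv'2
  have hM : ∀ x, ‖u x‖ ≤ ⨆ x, ‖u x‖ := le_ciSup hbdd
  have hM0 : 0 ≤ ⨆ x, ‖u x‖ := (norm_nonneg _).trans (hM 0)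
  have hsmul : (fun y => ((1 / cosh (y / lam) : ℝ) : ℂ) * u y)
      = fun y => (1 / cosh (y / lam)) • u y := by
    ext y; rw [Complex.real_smul]
  simp only [hsmul] at hv2 hv'2 ⊢
  have hhalf := integral_Ioi_sech_sq_mul_norm_rpow_le hlam hp hu
    (self_eq_neg.mp (by simpa using hodd 0)) hM hv2.integrableOn hv'2.integrableOn
  have hDp := setIntegral_le_integral (s := Ioi 0) hv'2
    (Eventually.of_forall fun x => by positivity)
  rw [integral_eq_two_mul_integral_Ioi_of_even fun x => by simp [neg_div, hodd]]
  calc 2 * ∫ x in Ioi 0, (1 / cosh (x / lam)) ^ 2 * ‖u x‖ ^ (p + 1)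
      ≤ 2 * ((p + 1) ^ 2 * (2 * ⨆ x, ‖u x‖) ^ (p - 1) / ((p - 1) / lam) ^ 2
        * ∫ x, ‖deriv (fun y => (1 / cosh (y / lam)) • u y) x‖ ^ 2) := by
        gcongr
        exact hhalf.trans (by gcongr)
    _ = _ := by
        rw [mul_rpow two_pos.le hM0, rpow_sub_one two_ne_zero]
        field_simp
end

section
/- Let V : ℝ → ℝ be a nonzero even Schwartz function with ∫_ℝ (|V(x)| + |V'(x)|)·cosh(2x) dx < ∞, fix λ > 1, and set φ(x) = λ·tanh(x/λ) (so φ'(x) = sech²(x/λ)). Then there exists μ₀ > 0 such that for every μ ∈ (0, μ₀) and every continuously differentiable odd v : ℝ → ℝ with v, v' square-integrable, 2∫_ℝ v'(x)² dx - (1/λ²)∫_ℝ sech²(x/λ) v(x)² dx - μ∫_ℝ V'(x)·(φ(x)/φ'(x))·v(x)² dx ≥ (1/2)∫_ℝ v'(x)² dx. -/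
/-!
For odd `v`, Cauchy–Schwarz on `[0, x]` gives the Hardy-type bound `v(x)² ≤ |x| ‖v'‖²`.
Since `∫ |x| sech²(x/λ) dx = 2 λ² log 2` (antiderivative `x tanh x - log cosh x`), the sech² term
costs at most `2 log 2 · ‖v'‖²`, strictly less than `(3/2) ‖v'‖²`. The potential weight
`φ/φ' = (λ/2) sinh(2x/λ)` times `|x|` is `O(cosh 2x)` because `λ > 1`, so the integrability of
`(|V| + |V'|) cosh 2x` makes the potential term `O(μ ‖v'‖²)`, which the gap `3/2 - 2 log 2`
absorbs for small `μ`.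
-/

open MeasureTheory Real Filter Set Topology

theorem sq_intervalIntegral_le_mul {g : ℝ → ℝ} (hg : Continuous g) {a b : ℝ} (hab : a ≤ b) :
    (∫ x in a..b, g x) ^ 2 ≤ (b - a) * ∫ x in a..b, g x ^ 2 := by
  have hquad : ∀ t, 0 ≤ (b - a) * (t * t) + (-2 * ∫ x in a..b, g x) * t + ∫ x in a..b, g x ^ 2 := by
    intro t
    have hsq : 0 ≤ ∫ x in a..b, (g x - t) ^ 2 :=
      intervalIntegral.integral_nonneg hab fun _ _ => sq_nonneg _
    have hexpand : ∫ x in a..b, (g x - t) ^ 2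
        = ∫ x in a..b, (g x ^ 2 + (-2 * t) * g x + t ^ 2) := by
      congr 1; ext x; ring
    rw [hexpand, intervalIntegral.integral_add, intervalIntegral.integral_add,
      intervalIntegral.integral_const_mul, intervalIntegral.integral_const, smul_eq_mul] at hsq
    · linarith
    all_goals exact Continuous.intervalIntegrable (by fun_prop) _ _
  have := discrim_le_zero hquad
  rw [discrim] at this
  linarith

theorem sq_le_abs_mul_integral_deriv_sq {v : ℝ → ℝ} (hv : ContDiff ℝ 1 v)
    (hodd : ∀ x, v (-x) = -v x) (hdv : Integrable fun x => deriv v x ^ 2) (x : ℝ) :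
    v x ^ 2 ≤ |x| * ∫ y, deriv v y ^ 2 := by
  have hv0 : v 0 = 0 := by linarith [neg_zero (G := ℝ) ▸ hodd 0]
  have hcont : Continuous (deriv v) := hv.continuous_deriv le_rfl
  have hnonneg : ∀ x, 0 ≤ x → v x ^ 2 ≤ x * ∫ y, deriv v y ^ 2 := by
    intro x hx
    have hftc : ∫ y in 0..x, deriv v y = v x := by
      rw [intervalIntegral.integral_deriv_eq_sub (fun t _ => hv.differentiable one_ne_zero t)
        (hcont.intervalIntegrable 0 x), hv0, sub_zero]
    calc v x ^ 2 = (∫ y in 0..x, deriv v y) ^ 2 := by rw [hftc]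
      _ ≤ (x - 0) * ∫ y in 0..x, deriv v y ^ 2 := sq_intervalIntegral_le_mul hcont hx
      _ ≤ x * ∫ y, deriv v y ^ 2 := by
        rw [sub_zero, intervalIntegral.integral_of_le hx]
        exact mul_le_mul_of_nonneg_left
          (setIntegral_le_integral hdv (ae_of_all _ fun _ => sq_nonneg _)) hx
  rcases le_total 0 x with hx | hx
  · rw [abs_of_nonneg hx]; exact hnonneg x hx
  · have := hnonneg (-x) (neg_nonneg.mpr hx)
    rwa [hodd, neg_sq, ← abs_of_nonpos hx] at this

theorem Real.hasDerivAt_tanh (x : ℝ) : HasDerivAt tanh ((1 / cosh x) ^ 2) x := by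
  have h := (hasDerivAt_sinh x).div (hasDerivAt_cosh x) (cosh_pos x).ne'
  rw [show sinh / cosh = tanh from funext fun y => (tanh_eq_sinh_div_cosh y).symm] at h
  refine h.congr_deriv ?_
  have := cosh_sq_sub_sinh_sq x
  field_simp
  linarith

theorem hasDerivAt_mul_tanh_sub_log_cosh (x : ℝ) :
    HasDerivAt (fun y => y * tanh y - log (cosh y)) (x * (1 / cosh x) ^ 2) x := by
  refine (((hasDerivAt_id' x).mul (hasDerivAt_tanh x)).sub
    ((hasDerivAt_cosh x).log (cosh_pos x).ne')).congr_deriv ?_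
  rw [tanh_eq_sinh_div_cosh]
  ring

-- the form in which the limit `log 2` at `+∞` can be read off
theorem mul_tanh_sub_log_cosh_eq (y : ℝ) :
    y * tanh y - log (cosh y)
      = log 2 - log (1 + exp (-2 * y)) - 2 * (y * exp (-2 * y)) / (1 + exp (-2 * y)) := by
  have hsq : exp (-2 * y) = exp (-y) * exp (-y) := by rw [← exp_add]; ring_nf
  have hinv : exp y * exp (-y) = 1 := by rw [← exp_add, add_neg_cancel, exp_zero]
  have hcosh : cosh y = exp y * (1 + exp (-2 * y)) / 2 := by
    rw [cosh_eq, hsq]; linear_combination (-exp (-y) / 2) * hinv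
  have htanh : tanh y = 1 - 2 * exp (-2 * y) / (1 + exp (-2 * y)) := by
    rw [tanh_eq_sinh_div_cosh, hcosh, sinh_eq, hsq]
    field_simp
    linear_combination exp (-y) * hinv
  rw [htanh, hcosh, log_div (by positivity) two_ne_zero, log_mul (exp_pos y).ne' (by positivity),
    log_exp]
  field_simp
  ring

theorem tendsto_mul_tanh_sub_log_cosh_atTop :
    Tendsto (fun y => y * tanh y - log (cosh y)) atTop (𝓝 (log 2)) := by
  have hexp : Tendsto (fun y : ℝ => exp (-2 * y)) atTop (𝓝 0) :=
    tendsto_exp_atBot.comp (tendsto_id.const_mul_atTop_of_neg (by norm_num))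
  have hmul : Tendsto (fun y : ℝ => y * exp (-2 * y)) atTop (𝓝 0) := by
    simpa using tendsto_rpow_mul_exp_neg_mul_atTop_nhds_zero 1 2 two_pos
  have hden : Tendsto (fun y : ℝ => 1 + exp (-2 * y)) atTop (𝓝 1) := by
    simpa using hexp.const_add 1
  simp_rw [mul_tanh_sub_log_cosh_eq]
  simpa using ((hden.log one_ne_zero).const_sub (log 2)).sub
    ((hmul.const_mul 2).div hden one_ne_zero)

theorem integrableOn_Ioi_mul_sech_sq : IntegrableOn (fun x => x * (1 / cosh x) ^ 2) (Ioi 0) :=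
  integrableOn_Ioi_deriv_of_nonneg' (fun x _ => hasDerivAt_mul_tanh_sub_log_cosh x)
    (fun x hx => mul_nonneg (le_of_lt hx) (by positivity)) tendsto_mul_tanh_sub_log_cosh_atTop

theorem integral_Ioi_mul_sech_sq : ∫ x in Ioi 0, x * (1 / cosh x) ^ 2 = log 2 := by
  simpa using integral_Ioi_of_hasDerivAt_of_nonneg'
    (fun x _ => hasDerivAt_mul_tanh_sub_log_cosh x)
    (fun x hx => mul_nonneg (le_of_lt hx) (by positivity)) tendsto_mul_tanh_sub_log_cosh_atTop

theorem integrable_comp_abs_of_integrableOn_Ioi {E : Type*} [NormedAddCommGroup E] {f : ℝ → E}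
    (hf : IntegrableOn f (Ioi 0)) : Integrable fun x => f |x| := by
  have hpos : IntegrableOn (fun x => f |x|) (Ioi 0) :=
    hf.congr_fun (fun x hx => by rw [abs_of_pos hx]) measurableSet_Ioi
  have hneg : IntegrableOn (fun x => f |x|) (Iic 0) := by
    have hme : MeasurableEmbedding fun x : ℝ => -x := (Homeomorph.neg ℝ).measurableEmbedding
    rw [← Measure.map_neg_eq_self (volume : Measure ℝ), hme.integrableOn_map_iff]
    simp_rw [Function.comp_def, abs_neg, neg_preimage, neg_Iic, neg_zero]
    exact (integrableOn_Ici_iff_integrableOn_Ioi).mpr hpos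
  rw [← integrableOn_univ, ← Iic_union_Ioi (a := (0 : ℝ))]
  exact hneg.union hpos

theorem integrable_abs_mul_sech_sq : Integrable fun x => |x| * (1 / cosh x) ^ 2 := by
  simpa only [cosh_abs] using integrable_comp_abs_of_integrableOn_Ioi integrableOn_Ioi_mul_sech_sq

theorem integral_abs_mul_sech_sq : ∫ x, |x| * (1 / cosh x) ^ 2 = 2 * log 2 := by
  rw [← integral_Ioi_mul_sech_sq]
  simpa only [cosh_abs] using
    integral_comp_abs (f := fun x => x * (1 / cosh x) ^ 2)

theorem abs_mul_sech_sq_div_eq {lam : ℝ} (hlam : 0 < lam) (x : ℝ) :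
    |x| * (1 / cosh (x / lam)) ^ 2 = lam * (|x / lam| * (1 / cosh (x / lam)) ^ 2) := by
  rw [abs_div, abs_of_pos hlam]
  field_simp

theorem integrable_abs_mul_sech_sq_div {lam : ℝ} (hlam : 0 < lam) :
    Integrable fun x => |x| * (1 / cosh (x / lam)) ^ 2 := by
  simp_rw [abs_mul_sech_sq_div_eq hlam]
  exact (integrable_abs_mul_sech_sq.comp_div hlam.ne').const_mul lam

theorem integral_abs_mul_sech_sq_div {lam : ℝ} (hlam : 0 < lam) :
    ∫ x, |x| * (1 / cosh (x / lam)) ^ 2 = 2 * log 2 * lam ^ 2 := by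
  simp_rw [abs_mul_sech_sq_div_eq hlam]
  rw [integral_const_mul, Measure.integral_comp_div (fun y => |y| * (1 / cosh y) ^ 2),
    integral_abs_mul_sech_sq, abs_of_pos hlam, smul_eq_mul]
  ring

theorem tanh_div_sech_sq (y : ℝ) : tanh y / (1 / cosh y) ^ 2 = sinh (2 * y) / 2 := by
  rw [tanh_eq_sinh_div_cosh, sinh_two_mul]
  field_simp

theorem abs_sinh_le_exp_abs_div_two (z : ℝ) : |sinh z| ≤ exp |z| / 2 := by
  rw [abs_sinh, sinh_eq]
  linarith [exp_pos (-|z|)]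

theorem exp_abs_le_two_mul_cosh (z : ℝ) : exp |z| ≤ 2 * cosh z := by
  rw [← cosh_abs z, cosh_eq]
  linarith [exp_pos (-|z|)]

theorem abs_le_exp_mul_abs_div {δ : ℝ} (hδ : 0 < δ) (x : ℝ) : |x| ≤ exp (δ * |x|) / δ := by
  rw [le_div_iff₀ hδ]
  linarith [add_one_le_exp (δ * |x|)]

theorem abs_tanh_div_sech_sq_mul_abs_le {lam : ℝ} (hlam : 1 < lam) (x : ℝ) :
    |lam * tanh (x / lam) / (1 / cosh (x / lam)) ^ 2| * |x|
      ≤ lam ^ 2 / (4 * (lam - 1)) * cosh (2 * x) := by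
  have hlam0 : 0 < lam := by linarith
  set δ := 2 * (lam - 1) / lam with hδ_def
  have hδ : 0 < δ := div_pos (by linarith) hlam0
  have hexp : 2 * |x| / lam + δ * |x| = |2 * x| := by
    rw [abs_mul, abs_two, hδ_def]; field_simp; ring
  calc |lam * tanh (x / lam) / (1 / cosh (x / lam)) ^ 2| * |x|
      = lam / 2 * |sinh (2 * (x / lam))| * |x| := by
        rw [mul_div_assoc, tanh_div_sech_sq, abs_mul, abs_div, abs_of_pos hlam0, abs_two]; ring
    _ ≤ lam / 2 * (exp (2 * |x| / lam) / 2) * (exp (δ * |x|) / δ) := by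
        have harg : |2 * (x / lam)| = 2 * |x| / lam := by
          rw [abs_mul, abs_div, abs_two, abs_of_pos hlam0]; ring
        gcongr
        · exact harg ▸ abs_sinh_le_exp_abs_div_two _
        · exact abs_le_exp_mul_abs_div hδ x
    _ = lam ^ 2 / (8 * (lam - 1)) * exp |2 * x| := by
        rw [← hexp, exp_add, hδ_def]; field_simp; ring
    _ ≤ lam ^ 2 / (8 * (lam - 1)) * (2 * cosh (2 * x)) :=
        mul_le_mul_of_nonneg_left (exp_abs_le_two_mul_cosh _)
          (div_nonneg (by positivity) (by linarith))
    _ = lam ^ 2 / (4 * (lam - 1)) * cosh (2 * x) := by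
        field_simp; ring

theorem integral_sech_sq_div_mul_le {lam A : ℝ} (hlam : 0 < lam) {f : ℝ → ℝ}
    (hf0 : ∀ x, 0 ≤ f x) (hf : ∀ x, f x ≤ |x| * A) :
    ∫ x, (1 / cosh (x / lam)) ^ 2 * f x ≤ 2 * log 2 * lam ^ 2 * A := by
  calc ∫ x, (1 / cosh (x / lam)) ^ 2 * f x
      ≤ ∫ x, |x| * (1 / cosh (x / lam)) ^ 2 * A := by
        refine integral_mono_of_nonneg (ae_of_all _ fun x => mul_nonneg (by positivity) (hf0 x))
          ((integrable_abs_mul_sech_sq_div hlam).mul_const A) (ae_of_all _ fun x => ?_)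
        have := mul_le_mul_of_nonneg_left (hf x) (by positivity : 0 ≤ (1 / cosh (x / lam)) ^ 2)
        linarith
    _ = 2 * log 2 * lam ^ 2 * A := by
        rw [integral_mul_const, integral_abs_mul_sech_sq_div hlam]

theorem abs_integral_mul_weight_mul_le {lam A : ℝ} (hlam : 1 < lam) {g f G : ℝ → ℝ}
    (hG : Integrable G) (hgG : ∀ x, |g x| * cosh (2 * x) ≤ G x) (hf : ∀ x, |f x| ≤ |x| * A) :
    |∫ x, g x * (lam * tanh (x / lam) / (1 / cosh (x / lam)) ^ 2) * f x|
      ≤ lam ^ 2 / (4 * (lam - 1)) * A * ∫ x, G x := by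
  have hA : 0 ≤ A := by simpa using (abs_nonneg _).trans (hf 1)
  rw [← norm_eq_abs]
  refine (norm_integral_le_of_norm_le (hG.const_mul _) (ae_of_all _ fun x => ?_)).trans_eq
    (integral_const_mul _ _)
  rw [norm_eq_abs, abs_mul, abs_mul]
  calc |g x| * |lam * tanh (x / lam) / (1 / cosh (x / lam)) ^ 2| * |f x|
      ≤ |g x| * |lam * tanh (x / lam) / (1 / cosh (x / lam)) ^ 2| * (|x| * A) := by
        gcongr; exact hf x
    _ ≤ |g x| * (lam ^ 2 / (4 * (lam - 1)) * cosh (2 * x)) * A := by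
        rw [← mul_assoc, mul_assoc (|g x|)]
        gcongr |g x| * ?_ * A
        exact abs_tanh_div_sech_sq_mul_abs_le hlam x
    _ ≤ lam ^ 2 / (4 * (lam - 1)) * A * G x := by
        have hK : 0 ≤ lam ^ 2 / (4 * (lam - 1)) := div_nonneg (by positivity) (by linarith)
        nlinarith [mul_le_mul_of_nonneg_left (hgG x) (mul_nonneg hK hA)]

theorem coercivity_modified_bilinear_form_odd_general
    (V : SchwartzMap ℝ ℝ)
    (hVint : Integrable (fun x : ℝ => (|V x| + |deriv (V : ℝ → ℝ) x|) * Real.cosh (2 * x)))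
    (lam : ℝ) (hlam : 1 < lam) :
    ∃ μ₀ > 0, ∀ μ : ℝ, μ ∈ Set.Ioo 0 μ₀ →
      ∀ v : ℝ → ℝ, ContDiff ℝ 1 v →
        (∀ x : ℝ, v (-x) = - v x) →
        Integrable (fun x : ℝ => (v x) ^ 2) →
        Integrable (fun x : ℝ => (deriv v x) ^ 2) →
        2 * (∫ x : ℝ, (deriv v x) ^ 2)
          - (1 / lam ^ 2) * (∫ x : ℝ, (1 / Real.cosh (x / lam)) ^ 2 * (v x) ^ 2)
          - μ * (∫ x : ℝ, deriv (V : ℝ → ℝ) x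
              * (lam * Real.tanh (x / lam) / (1 / Real.cosh (x / lam)) ^ 2) * (v x) ^ 2)
        ≥ (1 / 2) * ∫ x : ℝ, (deriv v x) ^ 2 := by
  have hlam0 : 0 < lam := by linarith
  set K := lam ^ 2 / (4 * (lam - 1))
  set I := ∫ x, (|V x| + |deriv (V : ℝ → ℝ) x|) * cosh (2 * x)
  have hKI : 0 ≤ K * I :=
    mul_nonneg (div_nonneg (by positivity) (by linarith)) (integral_nonneg fun x => by positivity)
  have hgap : 0 < 3 / 2 - 2 * log 2 := by linarith [log_two_lt_d9]
  refine ⟨(3 / 2 - 2 * log 2) / (K * I + 1), by positivity, ?_⟩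
  rintro μ ⟨hμ0, hμ⟩ v hv hodd - hdv
  set A := ∫ x, deriv v x ^ 2
  have hA : 0 ≤ A := integral_nonneg fun x => sq_nonneg _
  have hvA := sq_le_abs_mul_integral_deriv_sq hv hodd hdv
  have hsech : 1 / lam ^ 2 * ∫ x, (1 / cosh (x / lam)) ^ 2 * v x ^ 2 ≤ 2 * log 2 * A := by
    have := integral_sech_sq_div_mul_le hlam0 (fun x => sq_nonneg (v x)) hvA
    rw [div_mul_eq_mul_div, div_le_iff₀ (by positivity)]
    linarith
  have hpot := abs_integral_mul_weight_mul_le hlam hVint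
    (fun x => by gcongr; exact le_add_of_nonneg_left (abs_nonneg _))
    (fun x => (abs_of_nonneg (sq_nonneg (v x))).trans_le (hvA x))
  have hμKI : μ * (K * I) ≤ 3 / 2 - 2 * log 2 := by
    rw [lt_div_iff₀ (by positivity)] at hμ
    nlinarith
  set C := ∫ x, deriv (V : ℝ → ℝ) x * (lam * tanh (x / lam) / (1 / cosh (x / lam)) ^ 2) * v x ^ 2
  linarith [mul_le_mul_of_nonneg_left ((le_abs_self C).trans hpot) hμ0.le,
    mul_le_mul_of_nonneg_left hμKI hA]

/-- Proposition 3.2: coercivity of the modified quadratic form on odd functions,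
for small coupling μ. -/
theorem coercivity_modified_bilinear_form_odd
    (V : SchwartzMap ℝ ℝ) (hV0 : (V : ℝ → ℝ) ≠ 0)
    (hVeven : ∀ x : ℝ, V (-x) = V x)
    (hVint : Integrable (fun x : ℝ => (|V x| + |deriv (V : ℝ → ℝ) x|) * Real.cosh (2 * x)))
    (lam : ℝ) (hlam : 1 < lam) :
    ∃ μ₀ > 0, ∀ μ : ℝ, μ ∈ Set.Ioo 0 μ₀ →
      ∀ v : ℝ → ℝ, ContDiff ℝ 1 v →
        (∀ x : ℝ, v (-x) = - v x) →
        Integrable (fun x : ℝ => (v x) ^ 2) →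
        Integrable (fun x : ℝ => (deriv v x) ^ 2) →
        2 * (∫ x : ℝ, (deriv v x) ^ 2)
          - (1 / lam ^ 2) * (∫ x : ℝ, (1 / Real.cosh (x / lam)) ^ 2 * (v x) ^ 2)
          - μ * (∫ x : ℝ, deriv (V : ℝ → ℝ) x
              * (lam * Real.tanh (x / lam) / (1 / Real.cosh (x / lam)) ^ 2) * (v x) ^ 2)
        ≥ (1 / 2) * ∫ x : ℝ, (deriv v x) ^ 2 :=
  coercivity_modified_bilinear_form_odd_general V hVint lam hlam
end
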